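/- In the bipartite set-cover graph with apex q, conversely: if F ⊆ {q} × A is any set of at most κ added edges such that every node of B ∪ {q} is reachable from every size-1 maximizer of σ(·, F), then {D_j : (q, v_j) ∈ F} is a set cover of size at most κ. -/

import Mathlib

/-- The set of nodes reachable from a seed set `S` in the directed graph with
edge relation `r` (including the seeds themselves). -/
def reachSet {V : Type*} (r : V → V → Prop) (S : Set V) : Set V :=
  {v | ∃ s ∈ S, Relation.ReflTransGen r s v}

/-- Nodes of the set-cover reduction graph: set nodes `A = {v₁,…,v_μ}`,
ground-element nodes `B = {u₁,…,u_ν}`, and the extra node `q`. -/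
inductive SCNode (μ ν : ℕ) where
  | a : Fin μ → SCNode μ ν
  | b : Fin ν → SCNode μ ν
  | q : SCNode μ ν
  deriving DecidableEq, Fintype

/-- The deterministic base edges of the set-cover graph: `v_j → u_i` iff
`U_i ∈ D_j`, where `D j` is the `j`-th set of the set-cover instance. -/
def scEdge (μ ν : ℕ) (D : Fin μ → Set (Fin ν)) : SCNode μ ν → SCNode μ ν → Prop
  | .a j, .b i => i ∈ D j
  | _, _ => False

/-!
No edge enters the apex `q`, so a size-1 maximizer that reaches `q` must be `q` itself. From `q`
the only paths to a ground node `u_i` are `q → v_j → u_i` with `j ∈ F` and `U_i ∈ D_j`, so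
reaching every `u_i` from `q` says exactly that the chosen sets cover the ground set.
-/

open Relation

namespace SCNode

instance {μ ν : ℕ} : Nonempty (SCNode μ ν) := ⟨q⟩

variable {μ ν : ℕ} (D : Fin μ → Set (Fin ν)) (F : Set (Fin μ))

def apexEdge (x y : SCNode μ ν) : Prop :=
  scEdge μ ν D x y ∨ (x = q ∧ ∃ j ∈ F, y = a j)

variable {D F}

lemma not_apexEdge_q (x : SCNode μ ν) : ¬ apexEdge D F x q := by
  rintro (h | ⟨-, j, -, ⟨⟩⟩)
  cases x <;> exact h

lemma not_apexEdge_b (i : Fin ν) (y : SCNode μ ν) : ¬ apexEdge D F (b i) y := by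
  rintro (h | ⟨⟨⟩, -⟩)
  exact h

lemma eq_q_of_reflTransGen_apexEdge {x : SCNode μ ν}
    (h : ReflTransGen (apexEdge D F) x q) : x = q :=
  (reflTransGen_iff_eq (r := Function.swap (apexEdge D F)) not_apexEdge_q).1
    (reflTransGen_swap.2 h)

lemma mem_of_reflTransGen_apexEdge_a_b {j : Fin μ} {i : Fin ν}
    (h : ReflTransGen (apexEdge D F) (a j) (b i)) : i ∈ D j := by
  obtain h | ⟨c, hjc | ⟨⟨⟩, -⟩, hci⟩ := h.cases_head
  · cases h
  cases c with
  | b i' =>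
    obtain rfl : i = i' := b.inj ((reflTransGen_iff_eq (not_apexEdge_b i')).1 hci)
    exact hjc
  | a _ => cases hjc
  | q => cases hjc

lemma exists_mem_of_reflTransGen_apexEdge_q_b {i : Fin ν}
    (h : ReflTransGen (apexEdge D F) q (b i)) : ∃ j ∈ F, i ∈ D j := by
  obtain h | ⟨c, hqc | ⟨-, j, hj, rfl⟩, hci⟩ := h.cases_head
  · cases h
  · cases hqc
  · exact ⟨j, hj, mem_of_reflTransGen_apexEdge_a_b hci⟩

end SCNode

/-- Converse direction in the set-cover apex graph: if `F ⊆ {q} × A` has at most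
`κ` edges and every node of `B ∪ {q}` is reachable from every size-1 maximizer
of `σ(·, F)`, then `{D_j : (q, v_j) ∈ F}` is a set cover of size at most `κ`. -/
theorem setcover_apex_converse (μ ν κ : ℕ) (D : Fin μ → Set (Fin ν))
    (F : Set (Fin μ)) (hFcard : F.ncard ≤ κ)
    (hmax : ∀ w : SCNode μ ν,
        (∀ w' : SCNode μ ν,
            (reachSet (fun x y => scEdge μ ν D x y ∨ (x = SCNode.q ∧ ∃ j ∈ F, y = SCNode.a j))
                {w'}).ncard ≤
              (reachSet (fun x y => scEdge μ ν D x y ∨ (x = SCNode.q ∧ ∃ j ∈ F, y = SCNode.a j))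
                {w}).ncard) →
        (∀ i : Fin ν,
            Relation.ReflTransGen
              (fun x y => scEdge μ ν D x y ∨ (x = SCNode.q ∧ ∃ j ∈ F, y = SCNode.a j))
              w (SCNode.b i)) ∧
          Relation.ReflTransGen
            (fun x y => scEdge μ ν D x y ∨ (x = SCNode.q ∧ ∃ j ∈ F, y = SCNode.a j))
            w SCNode.q) :
    F.ncard ≤ κ ∧ ∀ i : Fin ν, ∃ j ∈ F, i ∈ D j := by
  obtain ⟨w, hw⟩ := Finite.exists_max fun w : SCNode μ ν =>
    (reachSet (SCNode.apexEdge D F) {w}).ncard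
  obtain ⟨hreach_b, hreach_q⟩ := hmax w hw
  obtain rfl := SCNode.eq_q_of_reflTransGen_apexEdge hreach_q
  exact ⟨hFcard, fun i => SCNode.exists_mem_of_reflTransGen_apexEdge_q_b (hreach_b i)⟩
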